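/- arXiv:1606.02639 — 3 statements merged into one kernel-verified Lean document; each statement's English description precedes it below -/
import Mathlib

section
/- Let F be a set of integers ≥ 2 such that every m ∈ F possesses a 'primitive' prime divisor, i.e., there is an injective map assigning to each m ∈ F a prime p(m) such that p(m) divides m but p(m) does not divide any m' ∈ F with m' < m. Then every element of the multiplicative monoid generated by F has a unique factorization (up to order) into elements of F. -/
theorem unique_factorisation_of_primitive_divisors
    (F : Set ℕ) (hF : ∀ m ∈ F, 2 ≤ m) (p : ℕ → ℕ)
    (hinj : Set.InjOn p F)
    (hp : ∀ m ∈ F, (p m).Prime ∧ p m ∣ m ∧ ∀ m' ∈ F, m' < m → ¬ p m ∣ m')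
    (s t : Multiset ℕ) (hs : ∀ m ∈ s, m ∈ F) (ht : ∀ m ∈ t, m ∈ F)
    (h : s.prod = t.prod) : s = t := by
  have key : ∀ (u v : Multiset ℕ), (∀ m ∈ u, m ∈ F) → (∀ m ∈ v, m ∈ F) →
      u.prod = v.prod → ∀ M ∈ u, (∀ x ∈ v, x ≤ M) → M ∈ v := by
    intro u v hu hv hprod M hMu hle
    obtain ⟨hP, hdvd, hmin⟩ := hp M (hu M hMu)
    have h1 : p M ∣ v.prod := hprod ▸ (hdvd.trans (Multiset.dvd_prod hMu))
    obtain ⟨n, hn, hpn⟩ := (hP.prime.exists_mem_multiset_dvd h1)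
    rcases lt_or_eq_of_le (hle n hn) with hlt | heq
    · exact absurd hpn (hmin n (hv n hn) hlt)
    · exact heq ▸ hn
  have main : ∀ n (s t : Multiset ℕ), s.card = n → (∀ m ∈ s, m ∈ F) →
      (∀ m ∈ t, m ∈ F) → s.prod = t.prod → s = t := by
    intro n
    induction n using Nat.strong_induction_on with
    | _ n IH =>
    intro s t hcard hs ht h
    rcases s.empty_or_exists_mem with hs0 | ⟨a, ha⟩
    · subst hs0
      simp only [Multiset.prod_zero] at h
      rcases t.empty_or_exists_mem with ht0 | ⟨b, hb⟩
      · exact ht0.symm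
      · exfalso
        have hbd : b ∣ t.prod := Multiset.dvd_prod hb
        rw [← h] at hbd
        have := Nat.le_of_dvd one_pos hbd
        have := hF b (ht b hb)
        omega
    · have hne : (s + t).toFinset.Nonempty :=
        ⟨a, Multiset.mem_toFinset.mpr (Multiset.mem_add.mpr (Or.inl ha))⟩
      set M := (s + t).toFinset.max' hne with hM
      have hMmem : M ∈ s + t := Multiset.mem_toFinset.mp ((s + t).toFinset.max'_mem hne)
      have hle : ∀ x ∈ s + t, x ≤ M :=
        fun x hx => (s + t).toFinset.le_max' x (Multiset.mem_toFinset.mpr hx)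
      have hles : ∀ x ∈ s, x ≤ M := fun x hx => hle x (Multiset.mem_add.mpr (Or.inl hx))
      have hlet : ∀ x ∈ t, x ≤ M := fun x hx => hle x (Multiset.mem_add.mpr (Or.inr hx))
      have hMst : M ∈ s ∧ M ∈ t := by
        rcases Multiset.mem_add.mp hMmem with hMs | hMt
        · exact ⟨hMs, key s t hs ht h M hMs hlet⟩
        · exact ⟨key t s ht hs h.symm M hMt hles, hMt⟩
      obtain ⟨hMs, hMt⟩ := hMst
      have hMF : M ∈ F := hs M hMs
      have hMpos : 0 < M := by have := hF M hMF; omega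
      have hps : M * (s.erase M).prod = s.prod := Multiset.prod_erase hMs
      have hpt : M * (t.erase M).prod = t.prod := Multiset.prod_erase hMt
      have hprod' : (s.erase M).prod = (t.erase M).prod := by
        have : M * (s.erase M).prod = M * (t.erase M).prod := by rw [hps, hpt, h]
        exact Nat.eq_of_mul_eq_mul_left hMpos this
      have hcard' : (s.erase M).card < n := by
        rw [← hcard]
        exact Multiset.card_erase_lt_of_mem hMs
      have herase : s.erase M = t.erase M :=
        IH _ hcard' _ _ rfl (fun m hm => hs m (Multiset.mem_of_mem_erase hm))
          (fun m hm => ht m (Multiset.mem_of_mem_erase hm)) hprod'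
      calc s = M ::ₘ s.erase M := (Multiset.cons_erase hMs).symm
        _ = M ::ₘ t.erase M := by rw [herase]
        _ = t := Multiset.cons_erase hMt
  exact main s.card s t rfl hs ht h
end

section
/- For 0 < u < 2 and real z > 0, the function f(z,u) = log(1 + u·e^{-z}/(1 - e^{-z})) has the series expansion f(z,u) = Σ_{j≥1} (1 - (1-u)^j)/j · e^{-zj}, and its Mellin transform ∫₀^∞ f(z,u) z^{s-1} dz equals (ζ(s+1) - Li_{s+1}(1-u))·Γ(s) for Re s > 1. -/
open Real Complex in
theorem f_series_and_mellin (u : ℝ) (hu : 0 < u) (hu2 : u < 2) :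
    (∀ z : ℝ, 0 < z →
      Real.log (1 + u * Real.exp (-z) / (1 - Real.exp (-z))) =
        ∑' j : ℕ, (1 - (1 - u) ^ (j + 1)) / (j + 1) * Real.exp (-z * (j + 1))) ∧
    (∀ s : ℂ, 1 < s.re →
      ∫ z in Set.Ioi (0 : ℝ),
        (Real.log (1 + u * Real.exp (-z) / (1 - Real.exp (-z))) : ℂ) * (z : ℂ) ^ (s - 1) =
      (riemannZeta (s + 1) - ∑' j : ℕ, ((1 - u : ℂ)) ^ (j + 1) / ((j + 1 : ℂ)) ^ (s + 1)) *
        Complex.Gamma s) := by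
  have hv : |1 - u| < 1 := by rw [abs_lt]; constructor <;> linarith
  have key : ∀ z : ℝ, 0 < z →
      HasSum (fun j : ℕ => (1 - (1 - u) ^ (j + 1)) / (j + 1) * Real.exp (-z * (j + 1)))
        (Real.log (1 + u * Real.exp (-z) / (1 - Real.exp (-z)))) := by
    intro z hz
    set x := Real.exp (-z) with hxdef
    have hx0 : 0 < x := Real.exp_pos _
    have hx1 : x < 1 := by
      rw [hxdef]
      exact Real.exp_lt_one_iff.mpr (by linarith)
    have hxabs : |x| < 1 := by rw [abs_of_pos hx0]; exact hx1
    have hyabs : |(1 - u) * x| < 1 := by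
      rw [abs_mul, abs_of_pos hx0]
      nlinarith [abs_nonneg (1 - u)]
    have h1 := Real.hasSum_pow_div_log_of_abs_lt_one hxabs
    have h2 := Real.hasSum_pow_div_log_of_abs_lt_one hyabs
    have h3 := h1.sub h2
    have hden : 0 < 1 - x := by linarith
    have hnum : 0 < 1 - (1 - u) * x := by
      have h := le_abs_self ((1 - u) * x)
      linarith
    convert h3 using 1
    · exact rfl
    · funext j
      have hexp : Real.exp (-z * (j + 1)) = x ^ (j + 1) := by
        rw [hxdef, ← Real.exp_nat_mul]
        congr 1; push_cast; ring
      rw [hexp, mul_pow]; ring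
    · have hrw : 1 + u * x / (1 - x) = (1 - (1 - u) * x) / (1 - x) := by
        field_simp; ring
      rw [hrw, Real.log_div hnum.ne' hden.ne']
      ring
  refine ⟨fun z hz => (key z hz).tsum_eq.symm, fun s hs => ?_⟩
  have hs0 : 0 < s.re := by linarith
  have hs1 : 1 < (s + 1).re := by simp; linarith
  set F : ℝ → ℂ := fun z => (Real.log (1 + u * Real.exp (-z) / (1 - Real.exp (-z))) : ℂ) with hF
  set a : ℕ → ℂ := fun j => (((1 - (1 - u) ^ (j + 1)) / (j + 1) : ℝ) : ℂ) with ha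
  have hmellin : HasSum (fun i : ℕ => Complex.Gamma s * a i / (((i : ℝ) + 1 : ℝ) : ℂ) ^ s)
      (mellin F s) := by
    refine hasSum_mellin (fun i => Or.inr (by positivity)) hs0 (fun t ht => ?_) ?_
    · have h := (key t ht).mapL Complex.ofRealCLM
      simp only [Complex.ofRealCLM_apply, Complex.ofReal_mul] at h
      have harg : ∀ j : ℕ, -((j : ℝ) + 1) * t = -t * ((j : ℝ) + 1) := fun j => by ring
      simp only [harg]
      exact h
    · have hgeo : Summable (fun i : ℕ => 2 / ((i : ℝ) + 1) ^ s.re) := by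
        have h := (Real.summable_one_div_nat_rpow.mpr hs).comp_injective Nat.succ_injective
        have h2 := h.mul_left 2
        refine h2.congr fun n => ?_
        simp only [Function.comp]
        push_cast
        ring
      refine Summable.of_nonneg_of_le (fun i => by positivity) (fun i => ?_) hgeo
      have hai : ‖a i‖ ≤ 2 := by
        rw [ha, Complex.norm_real, Real.norm_eq_abs, abs_div]
        have h1 : |1 - (1 - u) ^ (i + 1)| ≤ 2 := by
          have hp : |(1 - u) ^ (i + 1)| ≤ 1 := by
            rw [_root_.abs_pow]; exact pow_le_one₀ (abs_nonneg _) hv.le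
          have := abs_sub_abs_le_abs_sub (1 : ℝ) ((1 - u) ^ (i + 1))
          have := abs_sub (1 : ℝ) ((1 - u) ^ (i + 1))
          calc |1 - (1 - u) ^ (i + 1)| ≤ |(1:ℝ)| + |(1 - u) ^ (i + 1)| := abs_sub _ _
            _ ≤ 2 := by rw [abs_one]; linarith
        have h2 : (1 : ℝ) ≤ |(i : ℝ) + 1| := by
          rw [abs_of_pos (by positivity)]
          simp [Nat.cast_nonneg]
        rw [div_le_iff₀ (by linarith)]
        nlinarith [abs_nonneg (1 - (1 - u) ^ (i + 1))]
      gcongr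
  -- rewrite the integral as a mellin transform
  have hM : (∫ z in Set.Ioi (0 : ℝ), F z * (z : ℂ) ^ (s - 1)) = mellin F s := by
    rw [mellin]
    refine MeasureTheory.setIntegral_congr_fun measurableSet_Ioi fun t ht => ?_
    rw [smul_eq_mul, mul_comm]
  -- the Dirichlet side
  have hζsum : Summable (fun n : ℕ => 1 / ((n : ℂ) + 1) ^ (s + 1)) := by
    have h := (Complex.summable_one_div_nat_cpow.mpr hs1).comp_injective Nat.succ_injective
    refine h.congr fun n => ?_
    simp only [Function.comp]
    push_cast
    ring
  have S1 : HasSum (fun n : ℕ => 1 / ((n : ℂ) + 1) ^ (s + 1)) (riemannZeta (s + 1)) := by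
    rw [zeta_eq_tsum_one_div_nat_add_one_cpow hs1]
    exact hζsum.hasSum
  have hLisum : Summable (fun n : ℕ => ((1 - u : ℂ)) ^ (n + 1) / ((n : ℂ) + 1) ^ (s + 1)) := by
    refine Summable.of_norm ?_
    have hgeo : Summable (fun n : ℕ => |1 - u| ^ (n + 1)) := by
      have := (summable_geometric_of_lt_one (abs_nonneg (1 - u)) hv).mul_left |1 - u|
      refine this.congr fun n => ?_
      rw [pow_succ]; ring
    refine Summable.of_nonneg_of_le (fun n => norm_nonneg _) (fun n => ?_) hgeo
    rw [norm_div, norm_pow]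
    have hb : ‖((n : ℂ) + 1)‖ = ((n : ℝ) + 1) := by
      norm_cast
    have hnorm : 1 ≤ ‖((n : ℂ) + 1) ^ (s + 1)‖ := by
      have hcast : ((n : ℂ) + 1) = (((n : ℝ) + 1 : ℝ) : ℂ) := by push_cast; ring
      rw [hcast, Complex.norm_cpow_eq_rpow_re_of_pos (by positivity)]
      refine Real.one_le_rpow (by simp [Nat.cast_nonneg]) ?_
      have := hs1
      simp only [Complex.add_re, Complex.one_re] at this ⊢
      linarith
    have hnum : ‖(1 - u : ℂ)‖ = |1 - u| := by
      rw [show ((1 - u : ℂ)) = ((1 - u : ℝ) : ℂ) by push_cast; ring, Complex.norm_real,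
        Real.norm_eq_abs]
    rw [hnum]
    calc |1 - u| ^ (n + 1) / ‖((n : ℂ) + 1) ^ (s + 1)‖
        ≤ |1 - u| ^ (n + 1) / 1 := by
          gcongr
      _ = |1 - u| ^ (n + 1) := div_one _
  have S2 : HasSum (fun n : ℕ => ((1 - u : ℂ)) ^ (n + 1) / ((n : ℂ) + 1) ^ (s + 1))
      (∑' j : ℕ, ((1 - u : ℂ)) ^ (j + 1) / ((j + 1 : ℂ)) ^ (s + 1)) :=
    hLisum.hasSum
  have hRHS := (S1.sub S2).mul_right (Complex.Gamma s)
  have hRHS' : HasSum (fun i : ℕ => Complex.Gamma s * a i / (((i : ℝ) + 1 : ℝ) : ℂ) ^ s)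
      ((riemannZeta (s + 1) - ∑' j : ℕ, ((1 - u : ℂ)) ^ (j + 1) / ((j + 1 : ℂ)) ^ (s + 1)) *
        Complex.Gamma s) := by
    have hfun : (fun n : ℕ => (1 / ((n : ℂ) + 1) ^ (s + 1)
          - ((1 - u : ℂ)) ^ (n + 1) / ((n : ℂ) + 1) ^ (s + 1)) * Complex.Gamma s)
        = fun i : ℕ => Complex.Gamma s * a i / (((i : ℝ) + 1 : ℝ) : ℂ) ^ s := by
      funext n
      have hN0 : ((n : ℂ) + 1) ≠ 0 := Nat.cast_add_one_ne_zero n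
      have hNs : ((n : ℂ) + 1) ^ s ≠ 0 := by
        simp [Complex.cpow_eq_zero_iff, hN0]
      have hbase : ((((n : ℝ) + 1 : ℝ)) : ℂ) = (n : ℂ) + 1 := by push_cast; ring
      have hA : a n = (1 - ((1 - u : ℂ)) ^ (n + 1)) / ((n : ℂ) + 1) := by
        rw [ha]; push_cast; ring
      rw [hbase, hA, Complex.cpow_add _ _ hN0, Complex.cpow_one]
      field_simp
    exact hfun ▸ hRHS
  rw [hM]
  exact hmellin.unique hRHS'
end

section
/- Let F be a set of integers ≥ 2 with Σ_{m∈F} m^{-r} < ∞ for all r > 0, and for r > 0, t ∈ ℝ, u ∈ (1/2, 3/2) define d(z,u) = Π_{m∈F} (1 + u·m^{-z}/(1 - m^{-z})). Then log d(r,u) - Re log d(r+it, u) = Σ_{m∈F} Σ_{k≥1} ((1-(1-u)^k)/k)·m^{-kr}·(1 - cos(k t log m)), and in particular log d(r,u) - Re log d(r+it,u) ≥ u·Σ_{m∈F} m^{-r}(1 - cos(t log m)) ≥ 0. -/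
open Complex

namespace LogDAux

lemma cpow_pow_re (m : ℕ) (hm : 2 ≤ m) (s : ℂ) (k : ℕ) :
    (((m : ℂ) ^ (-s)) ^ k).re
      = (m : ℝ) ^ (-(k : ℝ) * s.re) * Real.cos ((k : ℝ) * s.im * Real.log m) := by
  have hm0 : (0 : ℝ) < m := by
    have : 0 < m := by omega
    exact_mod_cast this
  have hmne : (m : ℂ) ≠ 0 := Nat.cast_ne_zero.mpr (by omega)
  have h1 : (m : ℂ) ^ (-s) = Complex.exp ((Real.log m : ℂ) * (-s)) := by
    rw [Complex.cpow_def_of_ne_zero hmne, ← Complex.natCast_log]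
  rw [h1, ← Complex.exp_nat_mul]
  have h2 : (k : ℂ) * ((Real.log m : ℂ) * (-s)) = ((-((k : ℝ) * Real.log m) : ℝ) : ℂ) * s := by
    push_cast; ring
  rw [h2, Complex.exp_re, Complex.re_ofReal_mul, Complex.im_ofReal_mul,
    show -((k : ℝ) * Real.log m) * s.im = -((k : ℝ) * s.im * Real.log m) by ring,
    Real.cos_neg, Real.rpow_def_of_pos hm0]
  congr 2
  ring

lemma norm_cpow (m : ℕ) (hm : 2 ≤ m) (s : ℂ) : ‖(m : ℂ) ^ (-s)‖ = (m : ℝ) ^ (-s.re) := by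
  have hm0 : (0 : ℝ) < m := by
    have : 0 < m := by omega
    exact_mod_cast this
  rw [show ((m : ℕ) : ℂ) = (((m : ℕ) : ℝ) : ℂ) from (Complex.ofReal_natCast m).symm,
    Complex.norm_cpow_eq_rpow_re_of_pos hm0, Complex.neg_re]

lemma norm_cpow_lt_one (m : ℕ) (hm : 2 ≤ m) (s : ℂ) (hs : 0 < s.re) :
    ‖(m : ℂ) ^ (-s)‖ < 1 := by
  have hm1 : (1 : ℝ) < m := by exact_mod_cast (by omega : 1 < m)
  rw [norm_cpow m hm s]
  exact Real.rpow_lt_one_of_one_lt_of_neg hm1 (by linarith)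

lemma hasSum_re_log (m : ℕ) (hm : 2 ≤ m) (s : ℂ) (hs : 0 < s.re) (a : ℝ) (ha : |a| ≤ 1) :
    HasSum (fun k : ℕ => a ^ (k + 1) / ((k : ℝ) + 1) * (m : ℝ) ^ (-((k : ℝ) + 1) * s.re) *
        Real.cos (((k : ℝ) + 1) * s.im * Real.log m))
      (-(Complex.log (1 - (a : ℂ) * (m : ℂ) ^ (-s))).re) := by
  have hx : ‖(m : ℂ) ^ (-s)‖ < 1 := norm_cpow_lt_one m hm s hs
  have hz : ‖(a : ℂ) * (m : ℂ) ^ (-s)‖ < 1 := by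
    rw [norm_mul, Complex.norm_real, Real.norm_eq_abs]
    calc |a| * ‖(m : ℂ) ^ (-s)‖ ≤ 1 * ‖(m : ℂ) ^ (-s)‖ :=
          mul_le_mul_of_nonneg_right ha (norm_nonneg _)
      _ = ‖(m : ℂ) ^ (-s)‖ := one_mul _
      _ < 1 := hx
  have H := Complex.hasSum_re (Complex.hasSum_taylorSeries_neg_log hz)
  rw [Complex.neg_re] at H
  have H3 := (hasSum_nat_add_iff' 1).mpr H
  simp only [Finset.range_one, Finset.sum_singleton, pow_zero, Nat.cast_zero, div_zero,
    Complex.zero_re, sub_zero] at H3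
  have hterm : ∀ k : ℕ,
      a ^ (k + 1) / ((k : ℝ) + 1) * (m : ℝ) ^ (-((k : ℝ) + 1) * s.re) *
        Real.cos (((k : ℝ) + 1) * s.im * Real.log m)
      = ((((a : ℂ) * (m : ℂ) ^ (-s)) ^ (k + 1)) / ((k + 1 : ℕ) : ℂ)).re := by
    intro k
    have hxk := cpow_pow_re m hm s (k + 1)
    push_cast at hxk
    rw [show ((a : ℂ) * (m : ℂ) ^ (-s)) ^ (k + 1) / ((k + 1 : ℕ) : ℂ)
        = ((a ^ (k + 1) / ((k : ℝ) + 1) : ℝ) : ℂ) * ((m : ℂ) ^ (-s)) ^ (k + 1) by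
          push_cast; ring,
      Complex.re_ofReal_mul, hxk]
    ring
  have hfun : (fun k : ℕ => a ^ (k + 1) / ((k : ℝ) + 1) * (m : ℝ) ^ (-((k : ℝ) + 1) * s.re) *
        Real.cos (((k : ℝ) + 1) * s.im * Real.log m))
      = fun k : ℕ => ((((a : ℂ) * (m : ℂ) ^ (-s)) ^ (k + 1)) / ((k + 1 : ℕ) : ℂ)).re :=
    funext hterm
  rw [hfun]
  exact H3

lemma hasSum_re_log_term (m : ℕ) (hm : 2 ≤ m) (s : ℂ) (u ρ τ : ℝ)
    (hρ : s.re = ρ) (hτ : s.im = τ) (hρ0 : 0 < ρ) (hu : 1 / 2 < u) (hu2 : u < 3 / 2) :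
    HasSum (fun k : ℕ => ((1 - (1 - u) ^ (k + 1)) / ((k : ℝ) + 1)) *
        (m : ℝ) ^ (-((k : ℝ) + 1) * ρ) * Real.cos (((k : ℝ) + 1) * τ * Real.log m))
      ((Complex.log (1 + (u : ℂ) * (m : ℂ) ^ (-s) / (1 - (m : ℂ) ^ (-s)))).re) := by
  subst hρ hτ
  have hs : 0 < s.re := hρ0
  have hx : ‖(m : ℂ) ^ (-s)‖ < 1 := norm_cpow_lt_one m hm s hs
  have hA := hasSum_re_log m hm s hs 1 (by norm_num)
  have hB := hasSum_re_log m hm s hs (1 - u) (by rw [abs_le]; constructor <;> linarith)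
  simp only [Complex.ofReal_one, one_mul] at hA
  have H := hA.sub hB
  have hfun : (fun k : ℕ => ((1 - (1 - u) ^ (k + 1)) / ((k : ℝ) + 1)) *
        (m : ℝ) ^ (-((k : ℝ) + 1) * s.re) * Real.cos (((k : ℝ) + 1) * s.im * Real.log m))
      = fun k : ℕ =>
        ((1 : ℝ) ^ (k + 1) / ((k : ℝ) + 1) * (m : ℝ) ^ (-((k : ℝ) + 1) * s.re) *
          Real.cos (((k : ℝ) + 1) * s.im * Real.log m))
        - ((1 - u) ^ (k + 1) / ((k : ℝ) + 1) * (m : ℝ) ^ (-((k : ℝ) + 1) * s.re) *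
          Real.cos (((k : ℝ) + 1) * s.im * Real.log m)) := by
    funext k; ring
  have hval : (Complex.log (1 + (u : ℂ) * (m : ℂ) ^ (-s) / (1 - (m : ℂ) ^ (-s)))).re
      = -(Complex.log (1 - (m : ℂ) ^ (-s))).re
        - -(Complex.log (1 - ((1 - u : ℝ) : ℂ) * (m : ℂ) ^ (-s))).re := by
    have h1 : (1 : ℂ) - (m : ℂ) ^ (-s) ≠ 0 := by
      intro h
      rw [sub_eq_zero] at h
      rw [← h] at hx
      simp at hx
    have ha2 : ‖((1 - u : ℝ) : ℂ) * (m : ℂ) ^ (-s)‖ < 1 := by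
      rw [norm_mul, Complex.norm_real, Real.norm_eq_abs]
      have h1u : |1 - u| ≤ 1 := by rw [abs_le]; constructor <;> linarith
      calc |1 - u| * ‖(m : ℂ) ^ (-s)‖ ≤ 1 * ‖(m : ℂ) ^ (-s)‖ :=
            mul_le_mul_of_nonneg_right h1u (norm_nonneg _)
        _ = ‖(m : ℂ) ^ (-s)‖ := one_mul _
        _ < 1 := hx
    have h2 : (1 : ℂ) - ((1 - u : ℝ) : ℂ) * (m : ℂ) ^ (-s) ≠ 0 := by
      intro h
      rw [sub_eq_zero] at h
      rw [← h] at ha2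
      simp at ha2
    have hq : 1 + (u : ℂ) * (m : ℂ) ^ (-s) / (1 - (m : ℂ) ^ (-s))
        = (1 - ((1 - u : ℝ) : ℂ) * (m : ℂ) ^ (-s)) / (1 - (m : ℂ) ^ (-s)) := by
      field_simp
      push_cast; ring
    rw [hq, Complex.log_re, Complex.log_re, Complex.log_re, norm_div,
      Real.log_div (norm_ne_zero_iff.mpr h2) (norm_ne_zero_iff.mpr h1)]
    ring
  rw [hfun, hval]
  exact H

end LogDAux

open LogDAux in
theorem log_d_difference
    (F : Set ℕ) (hF : ∀ m ∈ F, 2 ≤ m)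
    (hsum : ∀ r : ℝ, 0 < r → Summable (fun m : F => (m : ℝ) ^ (-r)))
    (r t : ℝ) (hr : 0 < r) (u : ℝ) (hu : 1 / 2 < u) (hu2 : u < 3 / 2) :
    ((∑' m : F,
        Complex.log (1 + (u : ℂ) * (m : ℂ) ^ (-(r : ℂ)) / (1 - (m : ℂ) ^ (-(r : ℂ))))).re -
      (∑' m : F,
        Complex.log (1 + (u : ℂ) * (m : ℂ) ^ (-((r : ℂ) + t * Complex.I)) /
          (1 - (m : ℂ) ^ (-((r : ℂ) + t * Complex.I))))).re =
      ∑' m : F, ∑' k : ℕ,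
        ((1 - (1 - u) ^ (k + 1)) / (k + 1)) * (m : ℝ) ^ (-((k : ℝ) + 1) * r) *
          (1 - Real.cos (((k : ℝ) + 1) * t * Real.log m))) ∧
    ∑' m : F, ∑' k : ℕ,
        ((1 - (1 - u) ^ (k + 1)) / (k + 1)) * (m : ℝ) ^ (-((k : ℝ) + 1) * r) *
          (1 - Real.cos (((k : ℝ) + 1) * t * Real.log m)) ≥
      u * ∑' m : F, (m : ℝ) ^ (-r) * (1 - Real.cos (t * Real.log m)) ∧
    u * ∑' m : F, (m : ℝ) ^ (-r) * (1 - Real.cos (t * Real.log m)) ≥ 0 := by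
  -- the per-m double-series identity
  have hmain : ∀ m : F, HasSum
      (fun k : ℕ => ((1 - (1 - u) ^ (k + 1)) / ((k : ℝ) + 1)) *
          (m : ℝ) ^ (-((k : ℝ) + 1) * r) * (1 - Real.cos (((k : ℝ) + 1) * t * Real.log m)))
      ((Complex.log (1 + (u : ℂ) * (m : ℂ) ^ (-(r : ℂ)) / (1 - (m : ℂ) ^ (-(r : ℂ))))).re -
        (Complex.log (1 + (u : ℂ) * (m : ℂ) ^ (-((r : ℂ) + t * Complex.I)) /
          (1 - (m : ℂ) ^ (-((r : ℂ) + t * Complex.I))))).re) := by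
    intro m
    have h1 := hasSum_re_log_term m (hF m m.2) (r : ℂ) u r 0 (by simp) (by simp) hr hu hu2
    have h2 := hasSum_re_log_term m (hF m m.2) ((r : ℂ) + t * Complex.I) u r t
      (by simp) (by simp) hr hu hu2
    have H := h1.sub h2
    simp only [mul_zero, zero_mul, Real.cos_zero, mul_one] at H
    have hfun : (fun k : ℕ => ((1 - (1 - u) ^ (k + 1)) / ((k : ℝ) + 1)) *
          (m : ℝ) ^ (-((k : ℝ) + 1) * r) * (1 - Real.cos (((k : ℝ) + 1) * t * Real.log m)))
        = fun k : ℕ =>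
          ((1 - (1 - u) ^ (k + 1)) / ((k : ℝ) + 1)) * (m : ℝ) ^ (-((k : ℝ) + 1) * r)
          - ((1 - (1 - u) ^ (k + 1)) / ((k : ℝ) + 1)) * (m : ℝ) ^ (-((k : ℝ) + 1) * r) *
              Real.cos (((k : ℝ) + 1) * t * Real.log m) := by
      funext k; ring
    rw [hfun]
    exact H
  -- summability of the complex log terms
  have hslog : ∀ s : ℂ, s.re = r → Summable (fun m : F =>
      Complex.log (1 + (u : ℂ) * (m : ℂ) ^ (-s) / (1 - (m : ℂ) ^ (-s)))) := by
    intro s hs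
    have h2r : (2 : ℝ) ^ (-r) < 1 :=
      Real.rpow_lt_one_of_one_lt_of_neg one_lt_two (by linarith)
    set δ : ℝ := 1 - (2 : ℝ) ^ (-r) with hδdef
    have hδ : 0 < δ := by simp only [hδdef]; linarith
    have hbound : ∀ m : F, (m : ℝ) ^ (-r) ≤ δ / 3 →
        ‖Complex.log (1 + (u : ℂ) * (m : ℂ) ^ (-s) / (1 - (m : ℂ) ^ (-s)))‖
          ≤ (9 / 4) / δ * (m : ℝ) ^ (-r) := by
      intro m hmδ
      have hm2 : 2 ≤ (m : ℕ) := hF m m.2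
      have hm0 : (0 : ℝ) < (m : ℕ) := by
        have : 0 < (m : ℕ) := by omega
        exact_mod_cast this
      have hxnorm : ‖(m : ℂ) ^ (-s)‖ = (m : ℝ) ^ (-r) := by
        rw [norm_cpow m hm2 s, hs]
      have h2m : (2 : ℝ) ≤ (m : ℕ) := by exact_mod_cast hm2
      have hxle : ((m : ℕ) : ℝ) ^ (-r) ≤ (2 : ℝ) ^ (-r) := by
        rw [Real.rpow_neg (by positivity), Real.rpow_neg (by norm_num)]
        have h2r' : (2 : ℝ) ^ r ≤ ((m : ℕ) : ℝ) ^ r :=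
          Real.rpow_le_rpow (by norm_num) h2m hr.le
        have hpos : (0 : ℝ) < (2 : ℝ) ^ r := Real.rpow_pos_of_pos (by norm_num) r
        exact inv_anti₀ hpos h2r'
      have hden : δ ≤ ‖1 - (m : ℂ) ^ (-s)‖ := by
        have h1 : ‖(1 : ℂ)‖ - ‖(m : ℂ) ^ (-s)‖ ≤ ‖1 - (m : ℂ) ^ (-s)‖ :=
          norm_sub_norm_le _ _
        rw [norm_one, hxnorm] at h1
        have : δ ≤ 1 - (m : ℝ) ^ (-r) := by
          simp only [hδdef]; linarith [hxle]
        linarith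
      have hw : ‖(u : ℂ) * (m : ℂ) ^ (-s) / (1 - (m : ℂ) ^ (-s))‖
          ≤ 3 / 2 * (m : ℝ) ^ (-r) / δ := by
        rw [norm_div, norm_mul, Complex.norm_real, Real.norm_eq_abs, hxnorm]
        have hu3 : |u| ≤ 3 / 2 := abs_le.mpr ⟨by linarith, by linarith⟩
        apply div_le_div₀ (by positivity)
          (mul_le_mul_of_nonneg_right hu3 (by positivity)) hδ hden
      have hw2 : ‖(u : ℂ) * (m : ℂ) ^ (-s) / (1 - (m : ℂ) ^ (-s))‖ ≤ 1 / 2 := by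
        refine hw.trans ?_
        calc 3 / 2 * (m : ℝ) ^ (-r) / δ ≤ 3 / 2 * (δ / 3) / δ := by gcongr
          _ = 1 / 2 := by field_simp
      calc ‖Complex.log (1 + (u : ℂ) * (m : ℂ) ^ (-s) / (1 - (m : ℂ) ^ (-s)))‖
          ≤ 3 / 2 * ‖(u : ℂ) * (m : ℂ) ^ (-s) / (1 - (m : ℂ) ^ (-s))‖ :=
            Complex.norm_log_one_add_half_le_self hw2
        _ ≤ 3 / 2 * (3 / 2 * (m : ℝ) ^ (-r) / δ) := by
            exact mul_le_mul_of_nonneg_left hw (by norm_num)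
        _ = (9 / 4) / δ * (m : ℝ) ^ (-r) := by ring
    have hev : ∀ᶠ m : F in Filter.cofinite, (m : ℝ) ^ (-r) ≤ δ / 3 :=
      (hsum r hr).tendsto_cofinite_zero.eventually (eventually_le_nhds (by positivity))
    refine Summable.of_norm_bounded_eventually
      (g := fun m : F => (9 / 4) / δ * (m : ℝ) ^ (-r)) ((hsum r hr).mul_left _) ?_
    filter_upwards [hev] with m hm using hbound m hm
  have hf1 := hslog (r : ℂ) (by simp)
  have hf2 := hslog ((r : ℂ) + t * Complex.I) (by simp)
  have hre1 := (Complex.hasSum_re hf1.hasSum).summable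
  have hre2 := (Complex.hasSum_re hf2.hasSum).summable
  have hD : ∀ m : F, (∑' k : ℕ,
      ((1 - (1 - u) ^ (k + 1)) / ((k : ℝ) + 1)) * (m : ℝ) ^ (-((k : ℝ) + 1) * r) *
        (1 - Real.cos (((k : ℝ) + 1) * t * Real.log m)))
      = (Complex.log (1 + (u : ℂ) * (m : ℂ) ^ (-(r : ℂ)) / (1 - (m : ℂ) ^ (-(r : ℂ))))).re -
        (Complex.log (1 + (u : ℂ) * (m : ℂ) ^ (-((r : ℂ) + t * Complex.I)) /
          (1 - (m : ℂ) ^ (-((r : ℂ) + t * Complex.I))))).re :=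
    fun m => (hmain m).tsum_eq
  have hXsummable : Summable (fun m : F => ∑' k : ℕ,
      ((1 - (1 - u) ^ (k + 1)) / ((k : ℝ) + 1)) * (m : ℝ) ^ (-((k : ℝ) + 1) * r) *
        (1 - Real.cos (((k : ℝ) + 1) * t * Real.log m))) :=
    (hre1.sub hre2).congr fun m => (hD m).symm
  have hY : Summable (fun m : F => (m : ℝ) ^ (-r) * (1 - Real.cos (t * Real.log m))) := by
    refine Summable.of_nonneg_of_le
      (fun m => mul_nonneg (by positivity)
        (by linarith [Real.cos_le_one (t * Real.log (m : ℝ))]))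
      (fun m => ?_) ((hsum r hr).mul_left 2)
    have h1 := Real.neg_one_le_cos (t * Real.log (m : ℝ))
    calc (m : ℝ) ^ (-r) * (1 - Real.cos (t * Real.log (m : ℝ)))
        ≤ (m : ℝ) ^ (-r) * 2 := mul_le_mul_of_nonneg_left (by linarith) (by positivity)
      _ = 2 * (m : ℝ) ^ (-r) := mul_comm _ _
  have hnonneg : ∀ (m : F) (j : ℕ), 0 ≤
      ((1 - (1 - u) ^ (j + 1)) / ((j : ℝ) + 1)) * (m : ℝ) ^ (-((j : ℝ) + 1) * r) *
        (1 - Real.cos (((j : ℝ) + 1) * t * Real.log m)) := by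
    intro m j
    have h1 : (1 - u) ^ (j + 1) ≤ 1 := by
      calc (1 - u) ^ (j + 1) ≤ |(1 - u) ^ (j + 1)| := le_abs_self _
        _ = |1 - u| ^ (j + 1) := abs_pow _ _
        _ ≤ 1 := pow_le_one₀ (abs_nonneg _) (by rw [abs_le]; constructor <;> linarith)
    have h2 := Real.cos_le_one (((j : ℝ) + 1) * t * Real.log (m : ℝ))
    have hP : (0 : ℝ) ≤ (m : ℝ) ^ (-((j : ℝ) + 1) * r) := by positivity
    exact mul_nonneg (mul_nonneg (div_nonneg (by linarith) (by positivity)) hP) (by linarith)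
  have hterm : ∀ m : F, u * ((m : ℝ) ^ (-r) * (1 - Real.cos (t * Real.log m)))
      ≤ ∑' k : ℕ, ((1 - (1 - u) ^ (k + 1)) / ((k : ℝ) + 1)) *
          (m : ℝ) ^ (-((k : ℝ) + 1) * r) * (1 - Real.cos (((k : ℝ) + 1) * t * Real.log m)) := by
    intro m
    have h0 := Summable.le_tsum (hmain m).summable 0 (fun j _ => hnonneg m j)
    have heq0 : ((1 - (1 - u) ^ (0 + 1)) / (((0 : ℕ) : ℝ) + 1)) *
        (m : ℝ) ^ (-(((0 : ℕ) : ℝ) + 1) * r) *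
          (1 - Real.cos ((((0 : ℕ) : ℝ) + 1) * t * Real.log m))
        = u * ((m : ℝ) ^ (-r) * (1 - Real.cos (t * Real.log m))) := by
      norm_num
      ring
    rw [heq0] at h0
    exact h0
  refine ⟨?_, ?_, ?_⟩
  · rw [Complex.re_tsum hf1, Complex.re_tsum hf2, ← Summable.tsum_sub hre1 hre2]
    exact tsum_congr fun m => ((hmain m).tsum_eq).symm
  · rw [ge_iff_le, ← tsum_mul_left]
    exact Summable.tsum_le_tsum hterm (hY.mul_left u) hXsummable
  · exact mul_nonneg (by linarith)
      (tsum_nonneg fun m => mul_nonneg (by positivity)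
        (by linarith [Real.cos_le_one (t * Real.log (m : ℝ))]))
end
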